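/- arXiv:2407.21637 — 2 statements merged into one kernel-verified Lean document; each statement's English description precedes it below -/
import Mathlib

section
/- Fix integers ℓ ≥ 1, m ≥ 1 and set n = 2^ℓ·m. Let H̃, Ĥ be n×n real matrices, let p ≥ 0, and let ξ_1,…,ξ_ℓ ≥ 0 and u_1,…,u_ℓ ≥ 0 be real numbers such that for every level k ∈ {1,…,ℓ}: (a) every sibling off-diagonal block at level k satisfies ‖H̃_{ij}^{(k)}‖_F ≤ ξ_k ‖H̃‖_F, and (b) every sibling off-diagonal block at level k satisfies ‖H̃_{ij}^{(k)} − Ĥ_{ij}^{(k)}‖_F ≤ (2 + √p·u_k)·u_k·‖H̃_{ij}^{(k)}‖_F. Assume moreover Ĥ_{ii}^{(ℓ)} = H̃_{ii}^{(ℓ)} for all i ∈ {1,…,2^ℓ}. Then ‖H̃ − Ĥ‖_F² ≤ 2·( Σ_{k=1}^{ℓ} 2^k · ξ_k² · (2 + √p·u_k)² · u_k² ) · ‖H̃‖_F². -/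
/-- Frobenius norm of a real matrix: `‖M‖_F = (Σ_{i,j} m_{ij}²)^{1/2}`. -/
noncomputable def frob {α β : Type*} [Fintype α] [Fintype β] (A : Matrix α β ℝ) : ℝ :=
  Real.sqrt (∑ i, ∑ j, (A i j) ^ 2)

/-- For an `n × n` matrix with `n = 2^ℓ·m`, the level-`k` block `M_{ij}^{(k)}`
(0-based block indices `i, j`): the square submatrix of size `2^(ℓ-k)·m` whose
rows are `{i·2^(ℓ-k)·m, …, (i+1)·2^(ℓ-k)·m − 1}` and whose columns are
`{j·2^(ℓ-k)·m, …, (j+1)·2^(ℓ-k)·m − 1}` (and `0` outside the index range, which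
never occurs for valid block indices `i, j < 2^k`). -/
def blk (ℓ m : ℕ) (M : Matrix (Fin (2 ^ ℓ * m)) (Fin (2 ^ ℓ * m)) ℝ) (k i j : ℕ) :
    Matrix (Fin (2 ^ (ℓ - k) * m)) (Fin (2 ^ (ℓ - k) * m)) ℝ :=
  Matrix.of fun a b =>
    if h : i * (2 ^ (ℓ - k) * m) + a.val < 2 ^ ℓ * m ∧
           j * (2 ^ (ℓ - k) * m) + b.val < 2 ^ ℓ * m then
      M ⟨i * (2 ^ (ℓ - k) * m) + a.val, h.1⟩ ⟨j * (2 ^ (ℓ - k) * m) + b.val, h.2⟩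
    else 0

lemma frob_nonneg' {α β : Type*} [Fintype α] [Fintype β] (A : Matrix α β ℝ) : 0 ≤ frob A :=
  Real.sqrt_nonneg _

lemma frob_sq {α β : Type*} [Fintype α] [Fintype β] (A : Matrix α β ℝ) :
    frob A ^ 2 = ∑ i, ∑ j, (A i j) ^ 2 :=
  Real.sq_sqrt (by positivity)

lemma blk_sub (ℓ m k i j : ℕ) (A B : Matrix (Fin (2^ℓ*m)) (Fin (2^ℓ*m)) ℝ) :
    blk ℓ m (A - B) k i j = blk ℓ m A k i j - blk ℓ m B k i j := by
  ext a b
  simp only [blk, Matrix.of_apply, Matrix.sub_apply]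
  split <;> simp

lemma blk_apply_div_mod (ℓ m k : ℕ) (M : Matrix (Fin (2^ℓ*m)) (Fin (2^ℓ*m)) ℝ)
    (a b : Fin (2^ℓ*m)) (ha : a.val % (2^(ℓ-k)*m) < 2^(ℓ-k)*m)
    (hb : b.val % (2^(ℓ-k)*m) < 2^(ℓ-k)*m) :
    blk ℓ m M k (a.val/(2^(ℓ-k)*m)) (b.val/(2^(ℓ-k)*m)) ⟨_, ha⟩ ⟨_, hb⟩ = M a b := by
  have h1 := Nat.div_add_mod' a.val (2^(ℓ-k)*m)
  have h2 := Nat.div_add_mod' b.val (2^(ℓ-k)*m)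
  have ha' := a.isLt
  have hb' := b.isLt
  simp only [blk, Matrix.of_apply]
  rw [dif_pos (by constructor <;> omega)]
  congr 1 <;> exact Fin.ext (by simp; omega)

lemma blk_sum_sq (ℓ m k : ℕ) (hk : k ≤ ℓ) (hm : 1 ≤ m) (i j : ℕ)
    (hi : i < 2 ^ k) (hj : j < 2 ^ k) (M : Matrix (Fin (2^ℓ*m)) (Fin (2^ℓ*m)) ℝ) :
    (∑ x, ∑ y, (blk ℓ m M k i j x y) ^ 2)
      = ∑ pq ∈ Finset.univ.filter
          (fun pq : Fin (2^ℓ*m) × Fin (2^ℓ*m) =>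
            pq.1.val / (2^(ℓ-k)*m) = i ∧ pq.2.val / (2^(ℓ-k)*m) = j),
          (M pq.1 pq.2) ^ 2 := by
  have hs : 0 < 2^(ℓ-k)*m := by
    have : (0:ℕ) < 2^(ℓ-k) := Nat.pow_pos (by norm_num)
    exact Nat.mul_pos this hm
  have hsn : 2^k * (2^(ℓ-k)*m) = 2^ℓ*m := by
    rw [← mul_assoc, ← pow_add, Nat.add_sub_cancel' hk]
  have key : ∀ (q : ℕ) (x : Fin (2^(ℓ-k)*m)), q < 2^k → q*(2^(ℓ-k)*m)+x.val < 2^ℓ*m := by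
    intro q x hq
    calc q*(2^(ℓ-k)*m)+x.val < q*(2^(ℓ-k)*m) + (2^(ℓ-k)*m) := by
          exact Nat.add_lt_add_left x.isLt _
      _ = (q+1)*(2^(ℓ-k)*m) := by ring
      _ ≤ 2^k * (2^(ℓ-k)*m) := Nat.mul_le_mul_right _ hq
      _ = 2^ℓ*m := hsn
  rw [← Finset.sum_product', ← Finset.univ_product_univ]
  refine Finset.sum_bij' (fun x _ => (⟨i*(2^(ℓ-k)*m)+x.1.val, key i x.1 hi⟩,
      (⟨j*(2^(ℓ-k)*m)+x.2.val, key j x.2 hj⟩ : Fin (2^ℓ*m))))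
    (fun pq _ => (⟨pq.1.val % (2^(ℓ-k)*m), Nat.mod_lt _ hs⟩,
      (⟨pq.2.val % (2^(ℓ-k)*m), Nat.mod_lt _ hs⟩ : Fin (2^(ℓ-k)*m))))
    ?_ ?_ ?_ ?_ ?_
  · intro x _
    refine Finset.mem_filter.2 ⟨Finset.mem_product.2 ⟨Finset.mem_univ _, Finset.mem_univ _⟩, ?_, ?_⟩
    · show (i*(2^(ℓ-k)*m)+x.1.val) / (2^(ℓ-k)*m) = i
      rw [mul_comm i, Nat.mul_add_div hs, Nat.div_eq_of_lt x.1.isLt, Nat.add_zero]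
    · show (j*(2^(ℓ-k)*m)+x.2.val) / (2^(ℓ-k)*m) = j
      rw [mul_comm j, Nat.mul_add_div hs, Nat.div_eq_of_lt x.2.isLt, Nat.add_zero]
  · intro pq _; exact Finset.mem_product.2 ⟨Finset.mem_univ _, Finset.mem_univ _⟩
  · intro x _
    have m1 : (i*(2^(ℓ-k)*m)+x.1.val) % (2^(ℓ-k)*m) = x.1.val := by
      rw [mul_comm i, Nat.mul_add_mod, Nat.mod_eq_of_lt x.1.isLt]
    have m2 : (j*(2^(ℓ-k)*m)+x.2.val) % (2^(ℓ-k)*m) = x.2.val := by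
      rw [mul_comm j, Nat.mul_add_mod, Nat.mod_eq_of_lt x.2.isLt]
    exact Prod.ext (Fin.ext m1) (Fin.ext m2)
  · intro pq hpq
    simp only [Finset.mem_filter] at hpq
    obtain ⟨-, h1', h2'⟩ := hpq
    have h1 := Nat.div_add_mod' pq.1.val (2^(ℓ-k)*m)
    have h2 := Nat.div_add_mod' pq.2.val (2^(ℓ-k)*m)
    subst h1'; subst h2'
    refine Prod.ext (Fin.ext ?_) (Fin.ext ?_) <;> simp <;> omega
  · intro x _
    simp only [blk, Matrix.of_apply]
    rw [dif_pos ⟨key i x.1 hi, key j x.2 hj⟩]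

/-- Squared-norm bound for the difference between a `(T_ℓ, p, ε)`-HODLR matrix `H̃` and its
mixed-precision representation `Ĥ`, where the level-`k` off-diagonal blocks have relative
magnitude at most `ξ_k` and are stored with rounding error `(2 + √p·u_k)·u_k`. -/
theorem hodlr_mixed_precision_sq_error (ℓ m : ℕ) (hℓ : 1 ≤ ℓ) (hm : 1 ≤ m)
    (p : ℝ) (hp : 0 ≤ p)
    (Ht Hh : Matrix (Fin (2 ^ ℓ * m)) (Fin (2 ^ ℓ * m)) ℝ)
    (ξ u : ℕ → ℝ)
    (hξ : ∀ k, 1 ≤ k → k ≤ ℓ → 0 ≤ ξ k)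
    (hu : ∀ k, 1 ≤ k → k ≤ ℓ → 0 ≤ u k)
    (hmag : ∀ k, 1 ≤ k → k ≤ ℓ → ∀ t < 2 ^ (k - 1),
      frob (blk ℓ m Ht k (2 * t) (2 * t + 1)) ≤ ξ k * frob Ht ∧
      frob (blk ℓ m Ht k (2 * t + 1) (2 * t)) ≤ ξ k * frob Ht)
    (herr : ∀ k, 1 ≤ k → k ≤ ℓ → ∀ t < 2 ^ (k - 1),
      frob (blk ℓ m Ht k (2 * t) (2 * t + 1) - blk ℓ m Hh k (2 * t) (2 * t + 1))
        ≤ (2 + Real.sqrt p * u k) * u k * frob (blk ℓ m Ht k (2 * t) (2 * t + 1)) ∧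
      frob (blk ℓ m Ht k (2 * t + 1) (2 * t) - blk ℓ m Hh k (2 * t + 1) (2 * t))
        ≤ (2 + Real.sqrt p * u k) * u k * frob (blk ℓ m Ht k (2 * t + 1) (2 * t)))
    (hdiag : ∀ i < 2 ^ ℓ, blk ℓ m Hh ℓ i i = blk ℓ m Ht ℓ i i) :
    frob (Ht - Hh) ^ 2
      ≤ 2 * (∑ k ∈ Finset.Icc 1 ℓ,
          (2 : ℝ) ^ k * ξ k ^ 2 * (2 + Real.sqrt p * u k) ^ 2 * u k ^ 2) * frob Ht ^ 2 := by
  classical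
  have hspos : ∀ k : ℕ, 0 < 2^(ℓ-k)*m :=
    fun k => Nat.mul_pos (Nat.pow_pos (by norm_num)) hm
  set A : ℕ → Finset (Fin (2^ℓ*m) × Fin (2^ℓ*m)) := fun k =>
    Finset.univ.filter
      (fun pq => pq.1.val / (2^(ℓ-k)*m) = pq.2.val / (2^(ℓ-k)*m)) with hA
  set F : ℕ → ℝ := fun k => ∑ pq ∈ A k, ((Ht - Hh) pq.1 pq.2)^2 with hF
  -- F 0 is the full squared norm
  have hF0 : frob (Ht - Hh)^2 = F 0 := by
    have hA0 : A 0 = Finset.univ := by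
      rw [hA]
      apply Finset.filter_true_of_mem
      intro pq _
      simp only [Nat.sub_zero]
      rw [Nat.div_eq_of_lt pq.1.isLt, Nat.div_eq_of_lt pq.2.isLt]
    rw [frob_sq]
    simp only [hF]
    rw [hA0, ← Finset.univ_product_univ, Finset.sum_product]
  -- F ℓ vanishes
  have hFl : F ℓ = 0 := by
    rw [hF]
    apply Finset.sum_eq_zero
    intro pq hpq
    simp only [hA, Finset.mem_filter, Finset.mem_univ, true_and] at hpq
    have hib : pq.2.val / (2^(ℓ-ℓ)*m) < 2^ℓ := by
      apply Nat.div_lt_of_lt_mul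
      calc pq.2.val < 2^ℓ*m := pq.2.isLt
        _ ≤ 2^(ℓ-ℓ)*m*2^ℓ := le_of_eq (by simp [Nat.sub_self]; ring)
    have e1 := blk_apply_div_mod ℓ m ℓ Hh pq.1 pq.2
      (Nat.mod_lt _ (hspos ℓ)) (Nat.mod_lt _ (hspos ℓ))
    have e2 := blk_apply_div_mod ℓ m ℓ Ht pq.1 pq.2
      (Nat.mod_lt _ (hspos ℓ)) (Nat.mod_lt _ (hspos ℓ))
    rw [hpq] at e1 e2
    rw [hdiag _ hib] at e1
    have : Ht pq.1 pq.2 = Hh pq.1 pq.2 := by rw [← e1, ← e2]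
    simp [Matrix.sub_apply, this]
  -- per-level bound
  have hstep : ∀ jj ∈ Finset.range ℓ, F jj - F (jj+1) ≤
      (2:ℝ)^(jj+1) * ξ (jj+1)^2 * (2 + Real.sqrt p * u (jj+1))^2 * u (jj+1)^2
        * frob Ht^2 := by
    intro jj hjj
    rw [Finset.mem_range] at hjj
    have hk1 : 1 ≤ jj+1 := Nat.succ_le_succ (Nat.zero_le _)
    have hkl : jj+1 ≤ ℓ := hjj
    have hSs : 2^(ℓ-jj)*m = (2^(ℓ-(jj+1))*m) * 2 := by
      have h : ℓ - jj = (ℓ-(jj+1)) + 1 := by omega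
      rw [h, pow_succ]; ring
    have hsub : A (jj+1) ⊆ A jj := by
      intro pq hpq
      simp only [hA, Finset.mem_filter, Finset.mem_univ, true_and] at hpq ⊢
      have e1 : pq.1.val/(2^(ℓ-jj)*m) = pq.1.val / (2^(ℓ-(jj+1))*m) / 2 := by
        rw [Nat.div_div_eq_div_mul, ← hSs]
      have e2 : pq.2.val/(2^(ℓ-jj)*m) = pq.2.val / (2^(ℓ-(jj+1))*m) / 2 := by
        rw [Nat.div_div_eq_div_mul, ← hSs]
      rw [e1, e2, hpq]
    have hdiff : F jj - F (jj+1) = ∑ pq ∈ A jj \ A (jj+1), ((Ht-Hh) pq.1 pq.2)^2 := by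
      rw [hF]; exact (Finset.sum_sdiff_eq_sub hsub).symm
    rw [hdiff]
    have hmaps : ∀ pq ∈ A jj \ A (jj+1),
        pq.1.val / (2^(ℓ-jj)*m) ∈ Finset.range (2^jj) := by
      intro pq _
      rw [Finset.mem_range]
      apply Nat.div_lt_of_lt_mul
      calc pq.1.val < 2^ℓ*m := pq.1.isLt
        _ = 2^(ℓ-jj)*m*2^jj := by
            rw [mul_comm (2^(ℓ-jj)*m), ← mul_assoc, ← pow_add]
            congr 2
            omega
    rw [← Finset.sum_fiberwise_of_maps_to hmaps]
    have hper : ∀ t ∈ Finset.range (2^jj),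
        (∑ pq ∈ (A jj \ A (jj+1)).filter
            (fun pq => pq.1.val / (2^(ℓ-jj)*m) = t),
          ((Ht-Hh) pq.1 pq.2)^2)
        ≤ 2 * ((2 + Real.sqrt p * u (jj+1)) * u (jj+1) * (ξ (jj+1) * frob Ht))^2 := by
      intro t ht
      rw [Finset.mem_range] at ht
      have ht' : t < 2^(jj+1-1) := by simpa using ht
      have h2t : 2*t < 2^(jj+1) := by have := pow_succ 2 jj; omega
      have h2t1 : 2*t+1 < 2^(jj+1) := by have := pow_succ 2 jj; omega
      have hsubset : (A jj \ A (jj+1)).filter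
            (fun pq => pq.1.val / (2^(ℓ-jj)*m) = t)
          ⊆ (Finset.univ.filter (fun pq : Fin (2^ℓ*m) × Fin (2^ℓ*m) =>
              pq.1.val / (2^(ℓ-(jj+1))*m) = 2*t ∧ pq.2.val / (2^(ℓ-(jj+1))*m) = 2*t+1))
            ∪ (Finset.univ.filter (fun pq : Fin (2^ℓ*m) × Fin (2^ℓ*m) =>
              pq.1.val / (2^(ℓ-(jj+1))*m) = 2*t+1 ∧ pq.2.val / (2^(ℓ-(jj+1))*m) = 2*t)) := by
        intro pq hpq
        simp only [hA, Finset.mem_filter, Finset.mem_sdiff, Finset.mem_univ, true_and]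
          at hpq
        obtain ⟨⟨h1, h2⟩, h3⟩ := hpq
        have e1 : pq.1.val/(2^(ℓ-jj)*m) = pq.1.val / (2^(ℓ-(jj+1))*m) / 2 := by
          rw [Nat.div_div_eq_div_mul, ← hSs]
        have e2 : pq.2.val/(2^(ℓ-jj)*m) = pq.2.val / (2^(ℓ-(jj+1))*m) / 2 := by
          rw [Nat.div_div_eq_div_mul, ← hSs]
        simp only [Finset.mem_union, Finset.mem_filter, Finset.mem_univ, true_and]
        omega
      have hdisj : Disjoint
          (Finset.univ.filter (fun pq : Fin (2^ℓ*m) × Fin (2^ℓ*m) =>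
              pq.1.val / (2^(ℓ-(jj+1))*m) = 2*t ∧ pq.2.val / (2^(ℓ-(jj+1))*m) = 2*t+1))
          (Finset.univ.filter (fun pq : Fin (2^ℓ*m) × Fin (2^ℓ*m) =>
              pq.1.val / (2^(ℓ-(jj+1))*m) = 2*t+1 ∧ pq.2.val / (2^(ℓ-(jj+1))*m) = 2*t)) := by
        rw [Finset.disjoint_left]
        intro pq h1 h2
        simp only [Finset.mem_filter, Finset.mem_univ, true_and] at h1 h2
        omega
      have hc : 0 ≤ (2 + Real.sqrt p * u (jj+1)) * u (jj+1) :=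
        mul_nonneg (add_nonneg (by norm_num)
          (mul_nonneg (Real.sqrt_nonneg _) (hu _ hk1 hkl))) (hu _ hk1 hkl)
      have hb1 : frob (blk ℓ m (Ht - Hh) (jj+1) (2*t) (2*t+1))
          ≤ (2 + Real.sqrt p * u (jj+1)) * u (jj+1) * (ξ (jj+1) * frob Ht) := by
        rw [blk_sub]
        calc frob (blk ℓ m Ht (jj+1) (2*t) (2*t+1) - blk ℓ m Hh (jj+1) (2*t) (2*t+1))
            ≤ (2 + Real.sqrt p * u (jj+1)) * u (jj+1)
              * frob (blk ℓ m Ht (jj+1) (2*t) (2*t+1)) := (herr _ hk1 hkl t ht').1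
          _ ≤ _ := mul_le_mul_of_nonneg_left (hmag _ hk1 hkl t ht').1 hc
      have hb2 : frob (blk ℓ m (Ht - Hh) (jj+1) (2*t+1) (2*t))
          ≤ (2 + Real.sqrt p * u (jj+1)) * u (jj+1) * (ξ (jj+1) * frob Ht) := by
        rw [blk_sub]
        calc frob (blk ℓ m Ht (jj+1) (2*t+1) (2*t) - blk ℓ m Hh (jj+1) (2*t+1) (2*t))
            ≤ (2 + Real.sqrt p * u (jj+1)) * u (jj+1)
              * frob (blk ℓ m Ht (jj+1) (2*t+1) (2*t)) := (herr _ hk1 hkl t ht').2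
          _ ≤ _ := mul_le_mul_of_nonneg_left (hmag _ hk1 hkl t ht').2 hc
      calc (∑ pq ∈ (A jj \ A (jj+1)).filter
            (fun pq => pq.1.val / (2^(ℓ-jj)*m) = t),
          ((Ht-Hh) pq.1 pq.2)^2)
          ≤ ∑ pq ∈ (_ ∪ _ : Finset (Fin (2^ℓ*m) × Fin (2^ℓ*m))), ((Ht-Hh) pq.1 pq.2)^2 :=
            Finset.sum_le_sum_of_subset_of_nonneg hsubset (fun _ _ _ => sq_nonneg _)
        _ = (∑ pq ∈ Finset.univ.filter (fun pq : Fin (2^ℓ*m) × Fin (2^ℓ*m) =>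
              pq.1.val / (2^(ℓ-(jj+1))*m) = 2*t ∧ pq.2.val / (2^(ℓ-(jj+1))*m) = 2*t+1),
              ((Ht-Hh) pq.1 pq.2)^2)
            + ∑ pq ∈ Finset.univ.filter (fun pq : Fin (2^ℓ*m) × Fin (2^ℓ*m) =>
              pq.1.val / (2^(ℓ-(jj+1))*m) = 2*t+1 ∧ pq.2.val / (2^(ℓ-(jj+1))*m) = 2*t),
              ((Ht-Hh) pq.1 pq.2)^2 := Finset.sum_union hdisj
        _ = frob (blk ℓ m (Ht - Hh) (jj+1) (2*t) (2*t+1))^2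
            + frob (blk ℓ m (Ht - Hh) (jj+1) (2*t+1) (2*t))^2 := by
            rw [frob_sq, frob_sq,
              blk_sum_sq ℓ m (jj+1) hkl hm (2*t) (2*t+1) h2t h2t1 (Ht - Hh),
              blk_sum_sq ℓ m (jj+1) hkl hm (2*t+1) (2*t) h2t1 h2t (Ht - Hh)]
        _ ≤ ((2 + Real.sqrt p * u (jj+1)) * u (jj+1) * (ξ (jj+1) * frob Ht))^2
            + ((2 + Real.sqrt p * u (jj+1)) * u (jj+1) * (ξ (jj+1) * frob Ht))^2 := by
            exact add_le_add (pow_le_pow_left₀ (frob_nonneg' _) hb1 2)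
              (pow_le_pow_left₀ (frob_nonneg' _) hb2 2)
        _ = 2 * ((2 + Real.sqrt p * u (jj+1)) * u (jj+1) * (ξ (jj+1) * frob Ht))^2 := by
            ring
    calc (∑ t ∈ Finset.range (2^jj), ∑ pq ∈ (A jj \ A (jj+1)).filter
            (fun pq => pq.1.val / (2^(ℓ-jj)*m) = t),
          ((Ht-Hh) pq.1 pq.2)^2)
        ≤ ∑ t ∈ Finset.range (2^jj),
            2 * ((2 + Real.sqrt p * u (jj+1)) * u (jj+1) * (ξ (jj+1) * frob Ht))^2 :=
          Finset.sum_le_sum hper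
      _ = (2:ℝ)^(jj+1) * ξ (jj+1)^2 * (2 + Real.sqrt p * u (jj+1))^2 * u (jj+1)^2
            * frob Ht^2 := by
          rw [Finset.sum_const, Finset.card_range, nsmul_eq_mul, pow_succ]
          push_cast
          ring
  -- assemble
  calc frob (Ht - Hh)^2 = F 0 - F ℓ := by rw [hF0, hFl, sub_zero]
    _ = ∑ jj ∈ Finset.range ℓ, (F jj - F (jj+1)) := (Finset.sum_range_sub' F ℓ).symm
    _ ≤ ∑ jj ∈ Finset.range ℓ,
          (2:ℝ)^(jj+1) * ξ (jj+1)^2 * (2 + Real.sqrt p * u (jj+1))^2 * u (jj+1)^2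
            * frob Ht^2 := Finset.sum_le_sum hstep
    _ = ∑ k ∈ Finset.Icc 1 ℓ,
          (2:ℝ)^k * ξ k^2 * (2 + Real.sqrt p * u k)^2 * u k^2 * frob Ht^2 := by
        rw [← Finset.Ico_add_one_right_eq_Icc, Finset.sum_Ico_eq_sum_range]
        exact Finset.sum_congr (by norm_num) (fun i _ => by rw [Nat.add_comm])
    _ = (∑ k ∈ Finset.Icc 1 ℓ,
          (2:ℝ)^k * ξ k^2 * (2 + Real.sqrt p * u k)^2 * u k^2) * frob Ht^2 := by
        rw [Finset.sum_mul]
    _ ≤ 2 * (∑ k ∈ Finset.Icc 1 ℓ,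
          (2:ℝ)^k * ξ k^2 * (2 + Real.sqrt p * u k)^2 * u k^2) * frob Ht^2 := by
        have hS : 0 ≤ ∑ k ∈ Finset.Icc 1 ℓ,
            (2:ℝ)^k * ξ k^2 * (2 + Real.sqrt p * u k)^2 * u k^2 :=
          Finset.sum_nonneg (fun k _ => by positivity)
        nlinarith [mul_nonneg hS (sq_nonneg (frob Ht))]
end

section
/- Fix integers ℓ ≥ 1, m ≥ 1 and set n = 2^ℓ·m. Let H, Ĥ, H_F be n×n real matrices, ε ≥ 0, and x ∈ ℝ^n. Assume: (a) for every level k ∈ {1,…,ℓ}, every sibling off-diagonal block satisfies ‖Ĥ_{ij}^{(k)} − H_{ij}^{(k)}‖_F ≤ (2^{1−k/2} + 1)·ε·‖H‖_F, and every level-ℓ diagonal block satisfies ‖Ĥ_{ii}^{(ℓ)} − H_{ii}^{(ℓ)}‖_F ≤ ε·‖H‖_F; (b) the matrix H_F is blockwise dominated by Ĥ − H on the HODLR tiling, i.e. ‖(H_F)_{ij}^{(k)}‖_F ≤ ‖Ĥ_{ij}^{(k)} − H_{ij}^{(k)}‖_F for every sibling off-diagonal block at every level k ∈ {1,…,ℓ}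 and ‖(H_F)_{ii}^{(ℓ)}‖_F ≤ ‖Ĥ_{ii}^{(ℓ)} − H_{ii}^{(ℓ)}‖_F for every i. Then the vector b̂ = (Ĥ + H_F)·x satisfies b̂ = (H + ΔH)·x with ΔH = (Ĥ − H) + H_F and ‖ΔH‖_F ≤ 2·(√2 + 1)·√(2^{ℓ+1} + 2^{ℓ−1})·ε·‖H‖_F. -/
namespace HodlrAux

lemma frob_nonneg {α β : Type*} [Fintype α] [Fintype β] (A : Matrix α β ℝ) : 0 ≤ frob A :=
  Real.sqrt_nonneg _

lemma frob_sq {α β : Type*} [Fintype α] [Fintype β] (A : Matrix α β ℝ) :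
    frob A ^ 2 = ∑ i, ∑ j, (A i j) ^ 2 := by
  rw [frob, Real.sq_sqrt (by positivity)]

lemma frob_add_le {α β : Type*} [Fintype α] [Fintype β] (A B : Matrix α β ℝ) :
    frob (A + B) ≤ frob A + frob B := by
  have hA : frob A ^ 2 = ∑ p : α × β, (A p.1 p.2) ^ 2 := by
    rw [frob_sq, Fintype.sum_prod_type]
  have hB : frob B ^ 2 = ∑ p : α × β, (B p.1 p.2) ^ 2 := by
    rw [frob_sq, Fintype.sum_prod_type]
  have hAB : frob (A + B) ^ 2 = ∑ p : α × β, (A p.1 p.2 + B p.1 p.2) ^ 2 := by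
    rw [frob_sq, Fintype.sum_prod_type]
    rfl
  have hCS := Finset.sum_mul_sq_le_sq_mul_sq Finset.univ
      (fun p : α × β => A p.1 p.2) (fun p : α × β => B p.1 p.2)
  have hcross : (∑ p : α × β, A p.1 p.2 * B p.1 p.2) ≤ frob A * frob B := by
    have h1 : (∑ p : α × β, A p.1 p.2 * B p.1 p.2) ^ 2 ≤ (frob A * frob B) ^ 2 := by
      rw [mul_pow, hA, hB]; exact hCS
    calc (∑ p : α × β, A p.1 p.2 * B p.1 p.2)
        ≤ |∑ p : α × β, A p.1 p.2 * B p.1 p.2| := le_abs_self _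
    _ = Real.sqrt ((∑ p : α × β, A p.1 p.2 * B p.1 p.2) ^ 2) := (Real.sqrt_sq_eq_abs _).symm
    _ ≤ Real.sqrt ((frob A * frob B) ^ 2) := Real.sqrt_le_sqrt h1
    _ = frob A * frob B := Real.sqrt_sq (mul_nonneg (frob_nonneg A) (frob_nonneg B))
  have hexp : frob (A + B) ^ 2 ≤ (frob A + frob B) ^ 2 := by
    rw [hAB]
    have h2 : ∑ p : α × β, (A p.1 p.2 + B p.1 p.2) ^ 2
        = (∑ p : α × β, (A p.1 p.2) ^ 2) + 2 * (∑ p : α × β, A p.1 p.2 * B p.1 p.2)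
          + (∑ p : α × β, (B p.1 p.2) ^ 2) := by
      rw [Finset.mul_sum, ← Finset.sum_add_distrib, ← Finset.sum_add_distrib]
      refine Finset.sum_congr rfl fun p _ => by ring
    rw [h2, ← hA, ← hB]
    nlinarith [hcross]
  calc frob (A + B) = Real.sqrt (frob (A + B) ^ 2) := (Real.sqrt_sq (frob_nonneg _)).symm
  _ ≤ Real.sqrt ((frob A + frob B) ^ 2) := Real.sqrt_le_sqrt hexp
  _ = frob A + frob B := Real.sqrt_sq (add_nonneg (frob_nonneg A) (frob_nonneg B))

variable {n : ℕ}

noncomputable def ext (M : Matrix (Fin n) (Fin n) ℝ) (a b : ℕ) : ℝ :=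
  if h : a < n ∧ b < n then M ⟨a, h.1⟩ ⟨b, h.2⟩ else 0

noncomputable def S (M : Matrix (Fin n) (Fin n) ℝ) (sz i j : ℕ) : ℝ :=
  ∑ a ∈ Finset.range sz, ∑ b ∈ Finset.range sz, (ext M (i * sz + a) (j * sz + b)) ^ 2

lemma blk_entry (ℓ m : ℕ) (M : Matrix (Fin (2 ^ ℓ * m)) (Fin (2 ^ ℓ * m)) ℝ) (k i j : ℕ)
    (a b : Fin (2 ^ (ℓ - k) * m)) :
    blk ℓ m M k i j a b = ext M (i * (2 ^ (ℓ - k) * m) + a) (j * (2 ^ (ℓ - k) * m) + b) := rfl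

lemma frob_blk_sq (ℓ m : ℕ) (M : Matrix (Fin (2 ^ ℓ * m)) (Fin (2 ^ ℓ * m)) ℝ) (k i j : ℕ) :
    frob (blk ℓ m M k i j) ^ 2 = S M (2 ^ (ℓ - k) * m) i j := by
  rw [frob_sq]
  simp only [blk_entry]
  unfold S
  rw [← Fin.sum_univ_eq_sum_range (fun a => ∑ b ∈ Finset.range (2 ^ (ℓ - k) * m),
      (ext M (i * (2 ^ (ℓ - k) * m) + a) (j * (2 ^ (ℓ - k) * m) + b)) ^ 2)]
  refine Finset.sum_congr rfl fun a _ => ?_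
  rw [← Fin.sum_univ_eq_sum_range (fun b =>
      (ext M (i * (2 ^ (ℓ - k) * m) + ↑a) (j * (2 ^ (ℓ - k) * m) + b)) ^ 2)]

lemma frob_sq_eq_S (M : Matrix (Fin n) (Fin n) ℝ) : frob M ^ 2 = S M n 0 0 := by
  rw [frob_sq]
  unfold S
  rw [← Fin.sum_univ_eq_sum_range (fun a => ∑ b ∈ Finset.range n,
      (ext M (0 * n + a) (0 * n + b)) ^ 2)]
  refine Finset.sum_congr rfl fun a _ => ?_
  rw [← Fin.sum_univ_eq_sum_range (fun b => (ext M (0 * n + ↑a) (0 * n + b)) ^ 2)]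
  refine Finset.sum_congr rfl fun b _ => ?_
  simp [ext, a.isLt, b.isLt]

lemma dsplit (g : ℕ → ℕ → ℝ) (s : ℕ) :
    ∑ a ∈ Finset.range (2 * s), ∑ b ∈ Finset.range (2 * s), g a b
      = (∑ a ∈ Finset.range s, ∑ b ∈ Finset.range s, g a b)
      + (∑ a ∈ Finset.range s, ∑ b ∈ Finset.range s, g a (s + b))
      + (∑ a ∈ Finset.range s, ∑ b ∈ Finset.range s, g (s + a) b)
      + (∑ a ∈ Finset.range s, ∑ b ∈ Finset.range s, g (s + a) (s + b)) := by
  rw [two_mul, Finset.sum_range_add]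
  simp only [Finset.sum_range_add]
  rw [Finset.sum_add_distrib, Finset.sum_add_distrib]
  ring

lemma S_split (M : Matrix (Fin n) (Fin n) ℝ) (s i j : ℕ) :
    S M (2 * s) i j = S M s (2 * i) (2 * j) + S M s (2 * i) (2 * j + 1)
      + S M s (2 * i + 1) (2 * j) + S M s (2 * i + 1) (2 * j + 1) := by
  unfold S
  rw [dsplit (fun a b => (ext M (i * (2 * s) + a) (j * (2 * s) + b)) ^ 2) s]
  have e2 : ∀ c a : ℕ, c * (2 * s) + (s + a) = (2 * c + 1) * s + a := by intros; ring
  have e1 : ∀ c a : ℕ, c * (2 * s) + a = 2 * c * s + a := by intros; ring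
  simp only [e2]
  simp only [e1]

lemma sum_range_two_mul (f : ℕ → ℝ) (n : ℕ) :
    ∑ i ∈ Finset.range (2 * n), f i = ∑ i ∈ Finset.range n, (f (2 * i) + f (2 * i + 1)) := by
  induction n with
  | zero => simp
  | succ n ih =>
    have h : 2 * (n + 1) = 2 * n + 2 := by ring
    rw [h, Finset.sum_range_add, ih, Finset.sum_range_succ]
    simp [Finset.sum_range_succ]

lemma partition (ℓ m : ℕ) (M : Matrix (Fin (2 ^ ℓ * m)) (Fin (2 ^ ℓ * m)) ℝ) :
    ∀ k, k ≤ ℓ →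
    S M (2 ^ ℓ * m) 0 0
      = (∑ j ∈ Finset.Icc 1 k, ∑ t ∈ Finset.range (2 ^ (j - 1)),
          (S M (2 ^ (ℓ - j) * m) (2 * t) (2 * t + 1) + S M (2 ^ (ℓ - j) * m) (2 * t + 1) (2 * t)))
        + ∑ i ∈ Finset.range (2 ^ k), S M (2 ^ (ℓ - k) * m) i i := by
  intro k
  induction k with
  | zero => intro _; simp
  | succ k ih =>
    intro hk
    have hk' : k ≤ ℓ := by omega
    rw [ih hk']
    have hsz : 2 ^ (ℓ - k) * m = 2 * (2 ^ (ℓ - (k + 1)) * m) := by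
      have h1 : ℓ - k = (ℓ - (k + 1)) + 1 := by omega
      rw [h1, pow_succ]; ring
    have hdiag : ∑ i ∈ Finset.range (2 ^ k), S M (2 ^ (ℓ - k) * m) i i
        = ∑ i ∈ Finset.range (2 ^ k),
            (S M (2 ^ (ℓ - (k + 1)) * m) (2 * i) (2 * i)
             + S M (2 ^ (ℓ - (k + 1)) * m) (2 * i) (2 * i + 1)
             + S M (2 ^ (ℓ - (k + 1)) * m) (2 * i + 1) (2 * i)
             + S M (2 ^ (ℓ - (k + 1)) * m) (2 * i + 1) (2 * i + 1)) := by
      refine Finset.sum_congr rfl fun i _ => ?_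
      rw [hsz, S_split]
    rw [hdiag]
    rw [Finset.sum_Icc_succ_top (by omega : 1 ≤ k + 1)]
    have h2 : (2 : ℕ) ^ (k + 1) = 2 * 2 ^ k := by rw [pow_succ]; ring
    rw [h2, sum_range_two_mul (fun i => S M (2 ^ (ℓ - (k + 1)) * m) i i), Nat.add_sub_cancel]
    simp only [Finset.sum_add_distrib]
    ring

lemma geom : ∀ ℓ : ℕ, ∑ k ∈ Finset.Icc 1 ℓ, (2 : ℝ) ^ (k - 1) = 2 ^ ℓ - 1 := by
  intro ℓ
  induction ℓ with
  | zero => simp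
  | succ ℓ ih =>
    rw [Finset.sum_Icc_succ_top (by omega : 1 ≤ ℓ + 1), ih, Nat.add_sub_cancel, pow_succ]
    ring

lemma blk_linear (ℓ m : ℕ) (A B C : Matrix (Fin (2 ^ ℓ * m)) (Fin (2 ^ ℓ * m)) ℝ) (k i j : ℕ) :
    blk ℓ m ((A - B) + C) k i j = (blk ℓ m A k i j - blk ℓ m B k i j) + blk ℓ m C k i j := by
  ext a b
  simp only [blk, Matrix.of_apply, Matrix.add_apply, Matrix.sub_apply]
  split <;> simp [Matrix.add_apply, Matrix.sub_apply]

end HodlrAux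
/-- Backward error of the mixed-precision HODLR matrix–vector product: if `Ĥ` satisfies
the adaptive-precision blockwise representation error bounds relative to `H`, and the
floating-point error matrix `H_F` is blockwise dominated by `Ĥ − H` on the HODLR tiling,
then the computed product `b̂ = (Ĥ + H_F)·x` equals `(H + ΔH)·x` with
`ΔH = (Ĥ − H) + H_F` and `‖ΔH‖_F ≤ 2·(√2 + 1)·√(2^(ℓ+1) + 2^(ℓ−1))·ε·‖H‖_F`. -/
theorem hodlr_matvec_backward_error (ℓ m : ℕ) (hℓ : 1 ≤ ℓ) (hm : 1 ≤ m)
    (ε : ℝ) (hε : 0 ≤ ε)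
    (H Hh HF : Matrix (Fin (2 ^ ℓ * m)) (Fin (2 ^ ℓ * m)) ℝ)
    (x : Fin (2 ^ ℓ * m) → ℝ)
    (hoff : ∀ k, 1 ≤ k → k ≤ ℓ → ∀ t < 2 ^ (k - 1),
      frob (blk ℓ m Hh k (2 * t) (2 * t + 1) - blk ℓ m H k (2 * t) (2 * t + 1))
        ≤ (2 / Real.sqrt ((2 : ℝ) ^ k) + 1) * ε * frob H ∧
      frob (blk ℓ m Hh k (2 * t + 1) (2 * t) - blk ℓ m H k (2 * t + 1) (2 * t))
        ≤ (2 / Real.sqrt ((2 : ℝ) ^ k) + 1) * ε * frob H)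
    (hdiag : ∀ i < 2 ^ ℓ,
      frob (blk ℓ m Hh ℓ i i - blk ℓ m H ℓ i i) ≤ ε * frob H)
    (hFoff : ∀ k, 1 ≤ k → k ≤ ℓ → ∀ t < 2 ^ (k - 1),
      frob (blk ℓ m HF k (2 * t) (2 * t + 1))
        ≤ frob (blk ℓ m Hh k (2 * t) (2 * t + 1) - blk ℓ m H k (2 * t) (2 * t + 1)) ∧
      frob (blk ℓ m HF k (2 * t + 1) (2 * t))
        ≤ frob (blk ℓ m Hh k (2 * t + 1) (2 * t) - blk ℓ m H k (2 * t + 1) (2 * t)))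
    (hFdiag : ∀ i < 2 ^ ℓ,
      frob (blk ℓ m HF ℓ i i) ≤ frob (blk ℓ m Hh ℓ i i - blk ℓ m H ℓ i i)) :
    (Hh + HF).mulVec x = (H + ((Hh - H) + HF)).mulVec x ∧
    frob ((Hh - H) + HF)
      ≤ 2 * (Real.sqrt 2 + 1) * Real.sqrt ((2 : ℝ) ^ (ℓ + 1) + (2 : ℝ) ^ (ℓ - 1)) * ε * frob H := by

  constructor
  · have h : H + ((Hh - H) + HF) = Hh + HF := by abel
    rw [h]
  · set D : Matrix (Fin (2 ^ ℓ * m)) (Fin (2 ^ ℓ * m)) ℝ := (Hh - H) + HF with hD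
    have hE0 : 0 ≤ ε * frob H := mul_nonneg hε (HodlrAux.frob_nonneg H)
    have hs2 : Real.sqrt 2 ^ 2 = 2 := Real.sq_sqrt (by norm_num)
    have hs1 : 1 ≤ Real.sqrt 2 := by
      nlinarith [Real.sqrt_nonneg 2, hs2]
    -- bound for each off-diagonal tile
    have hoffb : ∀ k, 1 ≤ k → k ≤ ℓ → ∀ t, t < 2 ^ (k - 1) →
        HodlrAux.S D (2 ^ (ℓ - k) * m) (2 * t) (2 * t + 1)
          + HodlrAux.S D (2 ^ (ℓ - k) * m) (2 * t + 1) (2 * t)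
        ≤ 2 * (2 * (Real.sqrt 2 + 1) * (ε * frob H)) ^ 2 := by
      intro k hk1 hkl t ht
      obtain ⟨h1, h2⟩ := hoff k hk1 hkl t ht
      obtain ⟨g1, g2⟩ := hFoff k hk1 hkl t ht
      have hck : (2 / Real.sqrt ((2 : ℝ) ^ k) + 1) ≤ Real.sqrt 2 + 1 := by
        have h2k : (2 : ℝ) ≤ 2 ^ k := by
          calc (2 : ℝ) = 2 ^ 1 := (pow_one 2).symm
          _ ≤ 2 ^ k := pow_le_pow_right₀ (by norm_num) hk1
        have hmono : Real.sqrt 2 ≤ Real.sqrt ((2 : ℝ) ^ k) := Real.sqrt_le_sqrt h2k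
        have h0 : (0 : ℝ) < Real.sqrt 2 := by positivity
        have hdd : 2 / Real.sqrt ((2 : ℝ) ^ k) ≤ 2 / Real.sqrt 2 :=
          div_le_div_of_nonneg_left (by norm_num) h0 hmono
        have : (2 : ℝ) / Real.sqrt 2 = Real.sqrt 2 := Real.div_sqrt
        linarith
      have hckn : (0 : ℝ) ≤ (2 / Real.sqrt ((2 : ℝ) ^ k) + 1) := by positivity
      have key : ∀ i j : ℕ,
          frob (blk ℓ m Hh k i j - blk ℓ m H k i j)
            ≤ (2 / Real.sqrt ((2 : ℝ) ^ k) + 1) * ε * frob H →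
          frob (blk ℓ m HF k i j)
            ≤ frob (blk ℓ m Hh k i j - blk ℓ m H k i j) →
          HodlrAux.S D (2 ^ (ℓ - k) * m) i j
            ≤ (2 * (Real.sqrt 2 + 1) * (ε * frob H)) ^ 2 := by
        intro i j ha hb
        rw [← HodlrAux.frob_blk_sq]
        have hfb : frob (blk ℓ m D k i j)
            ≤ 2 * (Real.sqrt 2 + 1) * (ε * frob H) := by
          rw [hD, HodlrAux.blk_linear]
          calc frob ((blk ℓ m Hh k i j - blk ℓ m H k i j) + blk ℓ m HF k i j)
              ≤ frob (blk ℓ m Hh k i j - blk ℓ m H k i j) + frob (blk ℓ m HF k i j) :=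
                HodlrAux.frob_add_le _ _
          _ ≤ (2 / Real.sqrt ((2 : ℝ) ^ k) + 1) * ε * frob H
              + (2 / Real.sqrt ((2 : ℝ) ^ k) + 1) * ε * frob H := by
                have := le_trans hb ha
                linarith
          _ ≤ 2 * (Real.sqrt 2 + 1) * (ε * frob H) := by
                have hc : (2 / Real.sqrt ((2 : ℝ) ^ k) + 1) * ε * frob H
                    ≤ (Real.sqrt 2 + 1) * (ε * frob H) := by
                  rw [mul_assoc]
                  exact mul_le_mul_of_nonneg_right hck hE0
                linarith
        have := pow_le_pow_left₀ (HodlrAux.frob_nonneg _) hfb 2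
        exact this
      have := key (2 * t) (2 * t + 1) h1 g1
      have := key (2 * t + 1) (2 * t) h2 g2
      linarith
    -- bound for each diagonal tile
    have hdiagb : ∀ i, i < 2 ^ ℓ →
        HodlrAux.S D (2 ^ (ℓ - ℓ) * m) i i ≤ (2 * (ε * frob H)) ^ 2 := by
      intro i hi
      rw [← HodlrAux.frob_blk_sq]
      have hfb : frob (blk ℓ m D ℓ i i) ≤ 2 * (ε * frob H) := by
        rw [hD, HodlrAux.blk_linear]
        calc frob ((blk ℓ m Hh ℓ i i - blk ℓ m H ℓ i i) + blk ℓ m HF ℓ i i)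
            ≤ frob (blk ℓ m Hh ℓ i i - blk ℓ m H ℓ i i) + frob (blk ℓ m HF ℓ i i) :=
              HodlrAux.frob_add_le _ _
        _ ≤ 2 * (ε * frob H) := by
              have ha := hdiag i hi
              have hb := le_trans (hFdiag i hi) ha
              linarith
      exact pow_le_pow_left₀ (HodlrAux.frob_nonneg _) hfb 2
    -- assemble
    have hpart := HodlrAux.partition ℓ m D ℓ le_rfl
    have hfs : frob D ^ 2 = HodlrAux.S D (2 ^ ℓ * m) 0 0 := HodlrAux.frob_sq_eq_S D
    set B : ℝ := (2 * (Real.sqrt 2 + 1) * (ε * frob H)) ^ 2 with hBdef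
    have hsum1 : (∑ j ∈ Finset.Icc 1 ℓ, ∑ t ∈ Finset.range (2 ^ (j - 1)),
          (HodlrAux.S D (2 ^ (ℓ - j) * m) (2 * t) (2 * t + 1)
            + HodlrAux.S D (2 ^ (ℓ - j) * m) (2 * t + 1) (2 * t)))
        ≤ ((2 : ℝ) ^ ℓ - 1) * (2 * B) := by
      calc (∑ j ∈ Finset.Icc 1 ℓ, ∑ t ∈ Finset.range (2 ^ (j - 1)),
          (HodlrAux.S D (2 ^ (ℓ - j) * m) (2 * t) (2 * t + 1)
            + HodlrAux.S D (2 ^ (ℓ - j) * m) (2 * t + 1) (2 * t)))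
          ≤ ∑ j ∈ Finset.Icc 1 ℓ, ((2 : ℝ) ^ (j - 1)) * (2 * B) := by
            refine Finset.sum_le_sum fun k hk => ?_
            obtain ⟨hk1, hkl⟩ := Finset.mem_Icc.mp hk
            calc (∑ t ∈ Finset.range (2 ^ (k - 1)),
                (HodlrAux.S D (2 ^ (ℓ - k) * m) (2 * t) (2 * t + 1)
                  + HodlrAux.S D (2 ^ (ℓ - k) * m) (2 * t + 1) (2 * t)))
                ≤ ∑ _t ∈ Finset.range (2 ^ (k - 1)), 2 * B := by
                  refine Finset.sum_le_sum fun t ht => ?_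
                  exact hoffb k hk1 hkl t (Finset.mem_range.mp ht)
            _ = ((2 : ℝ) ^ (k - 1)) * (2 * B) := by
                  rw [Finset.sum_const, Finset.card_range, nsmul_eq_mul]
                  push_cast
                  ring
      _ = ((2 : ℝ) ^ ℓ - 1) * (2 * B) := by
            rw [← Finset.sum_mul, HodlrAux.geom ℓ]
    have hsum2 : (∑ i ∈ Finset.range (2 ^ ℓ), HodlrAux.S D (2 ^ (ℓ - ℓ) * m) i i)
        ≤ (2 : ℝ) ^ ℓ * (2 * (ε * frob H)) ^ 2 := by
      calc (∑ i ∈ Finset.range (2 ^ ℓ), HodlrAux.S D (2 ^ (ℓ - ℓ) * m) i i)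
          ≤ ∑ _i ∈ Finset.range (2 ^ ℓ), (2 * (ε * frob H)) ^ 2 := by
            refine Finset.sum_le_sum fun i hi => ?_
            exact hdiagb i (Finset.mem_range.mp hi)
      _ = (2 : ℝ) ^ ℓ * (2 * (ε * frob H)) ^ 2 := by
            rw [Finset.sum_const, Finset.card_range, nsmul_eq_mul]
            push_cast
            ring
    have hDsq : frob D ^ 2 ≤ ((2 : ℝ) ^ ℓ - 1) * (2 * B)
        + (2 : ℝ) ^ ℓ * (2 * (ε * frob H)) ^ 2 := by
      rw [hfs, hpart]
      exact add_le_add hsum1 hsum2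
    -- numeric endgame
    set R : ℝ := 2 * (Real.sqrt 2 + 1) * Real.sqrt ((2 : ℝ) ^ (ℓ + 1) + (2 : ℝ) ^ (ℓ - 1))
        * ε * frob H with hRdef
    have hX0 : (0 : ℝ) ≤ (2 : ℝ) ^ (ℓ + 1) + (2 : ℝ) ^ (ℓ - 1) := by positivity
    have hR0 : 0 ≤ R := by
      rw [hRdef]
      have h1 : (0 : ℝ) ≤ 2 * (Real.sqrt 2 + 1) := by positivity
      exact mul_nonneg (mul_nonneg (mul_nonneg h1
        (Real.sqrt_nonneg _)) hε) (HodlrAux.frob_nonneg H)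
    have hRsq : R ^ 2 = (2 * (Real.sqrt 2 + 1)) ^ 2
        * ((2 : ℝ) ^ (ℓ + 1) + (2 : ℝ) ^ (ℓ - 1)) * (ε * frob H) ^ 2 := by
      rw [hRdef]
      rw [show 2 * (Real.sqrt 2 + 1) * Real.sqrt ((2 : ℝ) ^ (ℓ + 1) + (2 : ℝ) ^ (ℓ - 1))
          * ε * frob H
        = (2 * (Real.sqrt 2 + 1)) * Real.sqrt ((2 : ℝ) ^ (ℓ + 1) + (2 : ℝ) ^ (ℓ - 1))
          * (ε * frob H) by ring]
      rw [mul_pow, mul_pow, Real.sq_sqrt hX0]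
    have hp1 : (1 : ℝ) ≤ (2 : ℝ) ^ (ℓ - 1) := one_le_pow₀ (by norm_num)
    have hpl : (2 : ℝ) ^ ℓ = 2 * (2 : ℝ) ^ (ℓ - 1) := by
      rw [← pow_succ']
      congr 1
      omega
    have hpl1 : (2 : ℝ) ^ (ℓ + 1) = 4 * (2 : ℝ) ^ (ℓ - 1) := by
      rw [pow_succ, hpl]; ring
    have hfinal : frob D ^ 2 ≤ R ^ 2 := by
      rw [hRsq]
      refine le_trans hDsq ?_
      rw [hBdef, hpl, hpl1]
      have hp0 : (0 : ℝ) ≤ (2 : ℝ) ^ (ℓ - 1) := by positivity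
      nlinarith [hs2, hs1, hE0, hp1, sq_nonneg (ε * frob H), Real.sqrt_nonneg 2,
        mul_nonneg hp0 (sq_nonneg (ε * frob H)),
        mul_nonneg (Real.sqrt_nonneg 2) (mul_nonneg hp0 (sq_nonneg (ε * frob H))),
        mul_nonneg (Real.sqrt_nonneg 2) (sq_nonneg (ε * frob H))]
    calc frob D = Real.sqrt (frob D ^ 2) := (Real.sqrt_sq (HodlrAux.frob_nonneg D)).symm
    _ ≤ Real.sqrt (R ^ 2) := Real.sqrt_le_sqrt hfinal
    _ = R := Real.sqrt_sq hR0
end
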